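/- arXiv:1805.07576 — 2 statements merged into one kernel-verified Lean document; each statement's English description precedes it below -/
import Mathlib

section
/- Let A be the bipartite adjacency matrix of a cubic Lehman graph with k=1, and let B be the (0,1)-matrix satisfying AB^T = J + I. If b_1 ≠ b_2 are distinct black vertices and w is a white vertex with A(b_1,w) = A(b_2,w) = 1, then for every white vertex w' ≠ w, at least one of B(b_1,w') and B(b_2,w') equals zero. -/
open Matrix BigOperators

/-- A (0,1)-matrix: every entry is 0 or 1. -/
def is01 {m n : Type*} (A : Matrix m n ℤ) : Prop := ∀ i j, A i j = 0 ∨ A i j = 1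

/-!
Bridges–Ryser: a matrix `A` with all line sums equal to `r ≠ 0` commutes with the all-ones
matrices, `J A = A J`, and is square. If `A Bᵀ = J + I`, then `A` is invertible since `J + I` is,
and cancelling `A` in `A (Bᵀ A) = (J + I) A = A (J + I)` gives `Bᵀ A = J + I`.
Read at the entry `(w', w)` with `w' ≠ w`, this says that exactly one black vertex `b` has
`B b w' = A b w = 1`, so `b₁` and `b₂` cannot both be such vertices.
-/

namespace Matrix

variable {U V W R K : Type*} [Fintype V] [Fintype W]

omit [Fintype W] in
theorem of_one_mul_of_one [NonAssocSemiring R] :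
    (of fun _ _ => (1 : R) : Matrix U V R) * (of fun _ _ => 1 : Matrix V W R) =
      (Fintype.card V : R) • of fun _ _ => 1 := by
  ext i j
  simp [mul_apply]

theorem of_one_mul_eq_mul_of_one [NonAssocSemiring R] {A : Matrix V W R} {r : R}
    (hrow : ∀ b, ∑ w, A b w = r) (hcol : ∀ w, ∑ b, A b w = r) :
    (of fun _ _ => 1 : Matrix V V R) * A = A * (of fun _ _ => 1 : Matrix W W R) := by
  ext i j
  simp [mul_apply, hrow, hcol]

theorem card_eq_of_lineSums [Semiring R] [IsDomain R] [CharZero R] {A : Matrix V W R} {r : R}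
    (hr : r ≠ 0) (hrow : ∀ b, ∑ w, A b w = r) (hcol : ∀ w, ∑ b, A b w = r) :
    Fintype.card V = Fintype.card W := by
  have h : (Fintype.card V : R) * r = Fintype.card W * r := by
    simpa [hrow, hcol] using (Finset.sum_comm (s := Finset.univ) (t := Finset.univ)
      (f := fun b w => A b w))
  exact_mod_cast mul_right_cancel₀ hr h

variable [DecidableEq V]

omit [Fintype V] in
theorem map_of_one_add_one {S : Type*} [NonAssocSemiring R] [NonAssocSemiring S] (f : R →+* S) :
    ((of fun _ _ => 1) + 1 : Matrix V V R).map f = (of fun _ _ => 1) + 1 := by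
  ext i j
  simp [one_apply]

theorem of_one_add_one_mul_inv [Field K] [CharZero K] :
    ((of fun _ _ => (1 : K)) + 1 : Matrix V V K) *
      (1 - ((Fintype.card V : K) + 1)⁻¹ • of fun _ _ => 1) = 1 := by
  have hn : (Fintype.card V : K) + 1 ≠ 0 := Nat.cast_add_one_ne_zero _
  rw [mul_sub, add_mul, add_mul, mul_one, mul_one, Matrix.mul_smul, Matrix.mul_smul, one_mul,
    of_one_mul_of_one, smul_smul]
  ext i j
  simp only [add_apply, sub_apply, smul_apply, of_apply, smul_eq_mul, mul_one]
  field_simp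
  ring

theorem transpose_mul_eq_of_mul_transpose_eq [DecidableEq W] [Field K] [CharZero K]
    {A B : Matrix V W K} {r : K} (hr : r ≠ 0)
    (hrow : ∀ b, ∑ w, A b w = r) (hcol : ∀ w, ∑ b, A b w = r)
    (hAB : A * Bᵀ = of (fun _ _ => 1) + 1) :
    Bᵀ * A = of (fun _ _ => 1) + 1 := by
  obtain ⟨M, hAM⟩ : ∃ M : Matrix W V K, A * M = 1 :=
    ⟨Bᵀ * (1 - ((Fintype.card V : K) + 1)⁻¹ • (of fun _ _ => 1 : Matrix V V K)),
      by rw [← Matrix.mul_assoc, hAB, of_one_add_one_mul_inv]⟩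
  have hMA : M * A = 1 :=
    (mul_eq_one_comm_of_equiv (Fintype.equivOfCardEq (card_eq_of_lineSums hr hrow hcol))).mp hAM
  calc Bᵀ * A = M * (A * Bᵀ * A) := by
        rw [Matrix.mul_assoc, ← Matrix.mul_assoc M, hMA, Matrix.one_mul]
    _ = M * (A * ((of fun _ _ => 1 : Matrix W W K) + 1)) := by
        rw [hAB, Matrix.add_mul, Matrix.one_mul, of_one_mul_eq_mul_of_one hrow hcol,
          Matrix.mul_add A, Matrix.mul_one]
    _ = (of fun _ _ => 1) + 1 := by rw [← Matrix.mul_assoc, hMA, Matrix.one_mul]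

theorem transpose_mul_eq_of_mul_transpose_eq_int [DecidableEq W]
    {A B : Matrix V W ℤ} {r : ℤ} (hr : r ≠ 0)
    (hrow : ∀ b, ∑ w, A b w = r) (hcol : ∀ w, ∑ b, A b w = r)
    (hAB : A * Bᵀ = of (fun _ _ => 1) + 1) :
    Bᵀ * A = of (fun _ _ => 1) + 1 := by
  let f := Int.castRingHom ℚ
  refine map_injective (f := f) Int.cast_injective ?_
  beta_reduce
  rw [Matrix.map_mul, transpose_map, map_of_one_add_one]
  refine transpose_mul_eq_of_mul_transpose_eq (r := f r) (by simpa [f] using hr)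
    (fun b => by simp [f, ← hrow b]) (fun w => by simp [f, ← hcol w]) ?_
  rw [← transpose_map, ← Matrix.map_mul, hAB, map_of_one_add_one]

end Matrix

theorem two_le_sum_of_eq_one_of_eq_one {V : Type*} [Fintype V] {f : V → ℤ}
    (hf : ∀ b, 0 ≤ f b) {b₁ b₂ : V} (hb : b₁ ≠ b₂) (h₁ : f b₁ = 1) (h₂ : f b₂ = 1) :
    2 ≤ ∑ b, f b := by
  classical
  calc (2 : ℤ) = ∑ b ∈ {b₁, b₂}, f b := by rw [Finset.sum_pair hb, h₁, h₂]; norm_num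
    _ ≤ ∑ b, f b := Finset.sum_le_sum_of_subset_of_nonneg (Finset.subset_univ _) fun b _ _ => hf b

theorem is01.nonneg {m n : Type*} {A : Matrix m n ℤ} (hA : is01 A) (i : m) (j : n) :
    0 ≤ A i j := by
  rcases hA i j with h | h <;> simp [h]

theorem stmt6_general {V W : Type*} [Fintype V] [Fintype W] [DecidableEq V]
    (A B : Matrix V W ℤ) (hA : is01 A) (hB : is01 B)
    (hArow : ∀ b, ∑ w, A b w = 3) (hAcol : ∀ w, ∑ b, A b w = 3)
    (hAB : A * Bᵀ = Matrix.of (fun _ _ => (1 : ℤ)) + 1)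
    (b₁ b₂ : V) (hb : b₁ ≠ b₂) (w : W)
    (h1 : A b₁ w = 1) (h2 : A b₂ w = 1) :
    ∀ w' : W, w' ≠ w → B b₁ w' = 0 ∨ B b₂ w' = 0 := by
  classical
  intro w' hw'
  have hBA := transpose_mul_eq_of_mul_transpose_eq_int (by norm_num) hArow hAcol hAB
  have hentry : ∑ b, B b w' * A b w = 1 := by
    simpa [mul_apply, one_apply, hw'] using congrFun (congrFun hBA w') w
  by_contra! hne
  have hB₁ := (hB b₁ w').resolve_left hne.1
  have hB₂ := (hB b₂ w').resolve_left hne.2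
  have := two_le_sum_of_eq_one_of_eq_one (fun b => mul_nonneg (hB.nonneg b w') (hA.nonneg b w))
    hb (by rw [hB₁, h1, one_mul]) (by rw [hB₂, h2, one_mul])
  omega

/-- In a cubic Lehman graph with k = 1: if two distinct black vertices share a white
neighbour w, then their mates share no white vertex other than possibly w. -/
theorem stmt6 {V W : Type*} [Fintype V] [Fintype W] [DecidableEq V] [DecidableEq W]
    (A B : Matrix V W ℤ) (hA : is01 A) (hB : is01 B)
    (hArow : ∀ b, ∑ w, A b w = 3) (hAcol : ∀ w, ∑ b, A b w = 3)
    (hAB : A * Bᵀ = Matrix.of (fun _ _ => (1 : ℤ)) + 1)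
    (b₁ b₂ : V) (hb : b₁ ≠ b₂) (w : W)
    (h1 : A b₁ w = 1) (h2 : A b₂ w = 1) :
    ∀ w' : W, w' ≠ w → B b₁ w' = 0 ∨ B b₂ w' = 0 :=
  stmt6_general A B hA hB hArow hAcol hAB b₁ b₂ hb w h1 h2
end

section
/- Let G be a cubic Lehman graph with k = 1, and let R be the perfect matching of rungs of G (the edges not appearing in the Hadamard product A∘B). Then the biclique expansion e(G,R) is a cubic negative Lehman graph (k = -1). -/
open Matrix BigOperators

/-! The expansion splits as `A' = L Lᵀ + P`, where `L : V × 2 → V` is the block incidence matrix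
and `P` a permutation matrix whose block sums are `Lᵀ P L = A_σ - I`, with `A_σ` the matrix `A`
whose columns are reindexed by the rungs `σ`. Lehman's lemma turns `A Bᵀ = J + I` into
`A_σᵀ B_σ = J + I`, and `B'ᵀ = Pᵀ (L B_σ Lᵀ - P) Pᵀ` then gives
`A' B'ᵀ = L (A_σᵀ B_σ) Lᵀ Pᵀ - L Lᵀ Pᵀ - I = J - I`. The subtracted `Pᵀ` never creates a `-1`:
the edge from `z` to `π z` joins two blocks along a non-rung edge of `G`, which lies in `A ∘ B`. -/

open Finset

namespace Matrix

variable {n R : Type*} [Fintype n] [DecidableEq n] [CommRing R]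

theorem det_ones_add_one : (of (fun _ _ => 1 : n → n → R) + 1).det = Fintype.card n + 1 := by
  have : (of (fun _ _ => 1 : n → n → R)) =
      (replicateCol Unit (1 : n → R) * replicateRow Unit (1 : n → R) : Matrix n n R) := by
    ext; simp [mul_apply]
  rw [this, add_comm, det_one_add_replicateCol_mul_replicateRow]
  simp [dotProduct, add_comm]

variable [IsDomain R]

theorem eq_zero_of_mul_eq_zero_of_det_ne_zero {A X : Matrix n n R} (hA : A.det ≠ 0)
    (h : A * X = 0) : X = 0 := by
  have : A.det • X = 0 := by
    rw [← Matrix.one_mul X, ← smul_mul_assoc, ← adjugate_mul, Matrix.mul_assoc, h,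
      Matrix.mul_zero]
  exact (smul_eq_zero.mp this).resolve_left hA

theorem mul_eq_of_mul_eq_of_commute {A C M : Matrix n n R} (hM : M.det ≠ 0)
    (hAC : A * C = M) (hAM : Commute A M) : C * A = M := by
  have hA : A.det ≠ 0 := fun h => hM (by rw [← hAC, det_mul, h, zero_mul])
  refine sub_eq_zero.mp (eq_zero_of_mul_eq_zero_of_det_ne_zero hA ?_)
  rw [Matrix.mul_sub, ← Matrix.mul_assoc, hAC, hAM.eq, sub_self]

/-- Lehman's lemma: constant line sums make `A` commute with `J + I = A Bᵀ`, which is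
invertible, so `Bᵀ A = J + I` as well. -/
theorem transpose_mul_eq_ones_add_one [CharZero R] {A B : Matrix n n R} {r : R}
    (hrow : ∀ i, ∑ j, A i j = r) (hcol : ∀ j, ∑ i, A i j = r)
    (hAB : A * Bᵀ = of (fun _ _ => 1) + 1) : Aᵀ * B = of (fun _ _ => 1) + 1 := by
  have hAJ : Commute A (of fun _ _ => 1) := by
    ext i j
    simp [mul_apply, hrow, hcol]
  have hBA : Bᵀ * A = of (fun _ _ => 1) + 1 := by
    refine mul_eq_of_mul_eq_of_commute ?_ hAB (hAJ.add_right (Commute.one_right A))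
    rw [det_ones_add_one]
    exact Nat.cast_add_one_ne_zero _
  rw [← transpose_transpose B, ← transpose_mul, hBA, transpose_add, transpose_one]
  rfl

end Matrix

theorem exists_eq_ite_of_sum_eq_one {α : Type*} [Fintype α] [DecidableEq α] {f : α → ℤ}
    (h01 : ∀ a, f a = 0 ∨ f a = 1) (hsum : ∑ a, f a = 1) :
    ∃ a, ∀ b, f b = if b = a then 1 else 0 := by
  have hf : ∀ b, f b = if f b = 1 then 1 else 0 := fun b => by
    rcases h01 b with h | h <;> simp [h]
  have hcard : #{b | f b = 1} = 1 := by
    rw [Finset.sum_congr rfl fun b _ => hf b, Finset.sum_boole] at hsum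
    exact_mod_cast hsum
  obtain ⟨a, ha⟩ := Finset.card_eq_one.mp hcard
  refine ⟨a, fun b => ?_⟩
  have hb : f b = 1 ↔ b = a := by simpa using Finset.ext_iff.mp ha b
  rw [hf b]
  exact if_congr hb rfl rfl

theorem exists_perm_eq_permMatrix {n : Type*} [Fintype n] [DecidableEq n] {N : Matrix n n ℤ}
    (h01 : is01 N) (hrow : ∀ i, ∑ j, N i j = 1) (hcol : ∀ j, ∑ i, N i j = 1) :
    ∃ π : Equiv.Perm n, N = π.permMatrix ℤ := by
  choose f hf using fun i => exists_eq_ite_of_sum_eq_one (h01 i) (hrow i)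
  have hinj : Function.Injective f := fun a b hab => by
    obtain ⟨c, hc⟩ := exists_eq_ite_of_sum_eq_one (fun i => h01 i (f a)) (hcol (f a))
    have ha := hc a
    have hb := hc b
    rw [hf] at ha hb
    grind
  refine ⟨Equiv.ofBijective f hinj.bijective_of_finite, ?_⟩
  ext i j
  simp [hf i j, eq_comm]

theorem eq_one_of_sum_mul_eq_sum_sub_one {α : Type*} [Fintype α]
    {a b : α → ℤ} (ha : ∀ w, a w = 0 ∨ a w = 1) (hb : ∀ w, b w = 0 ∨ b w = 1)
    (hab : ∑ w, a w * b w = ∑ w, a w - 1) {w₀ : α} (haw₀ : a w₀ = 1) (hbw₀ : b w₀ = 0)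
    {w : α} (hw : w ≠ w₀) (haw : a w = 1) : b w = 1 := by
  classical
  have h01 : ∀ v, a v * (1 - b v) = 0 ∨ a v * (1 - b v) = 1 := fun v => by
    rcases ha v with h | h <;> rcases hb v with h' | h' <;> simp [h, h']
  have hsum : ∑ v, a v * (1 - b v) = 1 := by
    simp only [mul_sub, mul_one, Finset.sum_sub_distrib, hab]
    ring
  obtain ⟨c, hc⟩ := exists_eq_ite_of_sum_eq_one h01 hsum
  have hc₀ := hc w₀
  have hcw := hc w
  simp only [haw₀, hbw₀, haw] at hc₀ hcw
  grind

def blockIncidence (V ι : Type*) [DecidableEq V] : Matrix (V × ι) V ℤ :=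
  of fun x i => if x.1 = i then 1 else 0

section blockIncidence

variable {V ι : Type*} [Fintype V] [DecidableEq V]

theorem blockIncidence_mul_transpose_apply (x y : V × ι) :
    (blockIncidence V ι * (blockIncidence V ι)ᵀ) x y = if x.1 = y.1 then 1 else 0 := by
  simp [blockIncidence, mul_apply]

theorem blockIncidence_mul_mul_transpose_apply (M : Matrix V V ℤ) (x y : V × ι) :
    (blockIncidence V ι * M * (blockIncidence V ι)ᵀ) x y = M x.1 y.1 := by
  simp [blockIncidence, mul_apply]

variable [Fintype ι]

theorem transpose_blockIncidence_mul_apply {m : Type*} (M : Matrix (V × ι) m ℤ) (i : V)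
    (z : m) : ((blockIncidence V ι)ᵀ * M) i z = ∑ p, M (i, p) z := by
  simp [blockIncidence, mul_apply, Fintype.sum_prod_type_right]

theorem mul_blockIncidence_apply {m : Type*} (M : Matrix m (V × ι) ℤ) (z : m) (j : V) :
    (M * blockIncidence V ι) z j = ∑ q, M z (j, q) := by
  simp [blockIncidence, mul_apply, Fintype.sum_prod_type_right]

theorem transpose_blockIncidence_mul_mul_apply (M : Matrix (V × ι) (V × ι) ℤ) (i j : V) :
    ((blockIncidence V ι)ᵀ * M * blockIncidence V ι) i j = ∑ p, ∑ q, M (i, p) (j, q) := by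
  simp only [mul_blockIncidence_apply, transpose_blockIncidence_mul_apply]
  exact Finset.sum_comm

theorem transpose_blockIncidence_mul_sub_mul {A' : Matrix (V × ι) (V × ι) ℤ}
    {M : Matrix V V ℤ} (hbic : ∀ i p q, A' (i, p) (i, q) = 1)
    (hout : ∀ i j, i ≠ j → ∑ p, ∑ q, A' (i, p) (j, q) = M i j) (hdiag : ∀ i, M i i = 1) :
    (blockIncidence V ι)ᵀ * (A' - blockIncidence V ι * (blockIncidence V ι)ᵀ) *
      blockIncidence V ι = M - 1 := by
  ext i j
  rw [transpose_blockIncidence_mul_mul_apply]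
  by_cases h : i = j
  · subst h
    simp [blockIncidence_mul_transpose_apply, hbic, hdiag]
  · simp [blockIncidence_mul_transpose_apply, h, hout i j h]

variable [DecidableEq ι]

theorem exists_perm_eq_blocks_add_permMatrix {A' : Matrix (V × ι) (V × ι) ℤ} (h01 : is01 A')
    (hbic : ∀ i p q, A' (i, p) (i, q) = 1)
    (hrow : ∀ x, ∑ y, A' x y = Fintype.card ι + 1)
    (hcol : ∀ y, ∑ x, A' x y = Fintype.card ι + 1) :
    ∃ π : Equiv.Perm (V × ι),
      A' = blockIncidence V ι * (blockIncidence V ι)ᵀ + π.permMatrix ℤ := by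
  simp_rw [← sub_eq_iff_eq_add']
  refine exists_perm_eq_permMatrix (fun x y => ?_) (fun x => ?_) (fun y => ?_)
  · rw [Matrix.sub_apply, blockIncidence_mul_transpose_apply]
    split_ifs with h
    · obtain ⟨i, p⟩ := x
      obtain ⟨j, q⟩ := y
      obtain rfl : i = j := h
      simp [hbic]
    · simpa using h01 x y
  · simp only [Matrix.sub_apply, Finset.sum_sub_distrib, hrow,
      blockIncidence_mul_transpose_apply, Fintype.sum_prod_type_right]
    simp
  · simp only [Matrix.sub_apply, Finset.sum_sub_distrib, hcol,
      blockIncidence_mul_transpose_apply, Fintype.sum_prod_type_right]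
    simp

theorem fst_ne_and_apply_eq_one_of_permMatrix_blocks {π : Equiv.Perm (V × ι)}
    {M : Matrix V V ℤ} (hM : is01 M)
    (h : (blockIncidence V ι)ᵀ * π.permMatrix ℤ * blockIncidence V ι = M - 1) (z : V × ι) :
    z.1 ≠ (π z).1 ∧ M z.1 (π z).1 = 1 := by
  have hz := congrFun (congrFun h z.1) (π z).1
  rw [transpose_blockIncidence_mul_mul_apply, ← Fintype.sum_prod_type'] at hz
  have hle : (1 : ℤ) ≤ ∑ y : ι × ι, π.permMatrix ℤ (z.1, y.1) ((π z).1, y.2) := by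
    refine le_trans ?_ (Finset.single_le_sum (fun y _ => ?_) (Finset.mem_univ (z.2, (π z).2)))
    · simp
    · simp only [PEquiv.toMatrix_toPEquiv_apply, Pi.single_apply]
      split_ifs <;> simp
  rw [hz, Matrix.sub_apply, one_apply] at hle
  rcases hM z.1 (π z).1 with h0 | h1 <;> split_ifs at hle <;> simp_all

/-- The `(y, w)` entry is `N (π⁻¹ w).1 (π y).1 - [w = π y]`. -/
def blockPartner (π : Equiv.Perm (V × ι)) (N : Matrix V V ℤ) : Matrix (V × ι) (V × ι) ℤ :=
  π.permMatrix ℤ * (blockIncidence V ι * Nᵀ * (blockIncidence V ι)ᵀ - (π.permMatrix ℤ)ᵀ) *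
    π.permMatrix ℤ

theorem is01_blockPartner {π : Equiv.Perm (V × ι)} {N : Matrix V V ℤ} (hN : is01 N)
    (hπN : ∀ z, N z.1 (π z).1 = 1) : is01 (blockPartner π N) := by
  have hX : is01 (blockIncidence V ι * Nᵀ * (blockIncidence V ι)ᵀ - (π.permMatrix ℤ)ᵀ) :=
    fun x z => by
      simp only [Matrix.sub_apply, blockIncidence_mul_mul_transpose_apply, transpose_permMatrix]
      rcases eq_or_ne (π.symm x) z with rfl | h
      · left
        simpa [sub_eq_zero] using hπN (π.symm x)
      · simpa [h] using hN z.1 x.1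
  rw [blockPartner, PEquiv.toMatrix_toPEquiv_mul, PEquiv.mul_toMatrix_toPEquiv]
  exact fun y w => hX _ _

theorem blocks_add_permMatrix_mul_transpose_blockPartner {π : Equiv.Perm (V × ι)}
    {M N : Matrix V V ℤ}
    (hLPL : (blockIncidence V ι)ᵀ * π.permMatrix ℤ * blockIncidence V ι = M - 1)
    (hMN : Mᵀ * N = of (fun _ _ => 1) + 1) :
    (blockIncidence V ι * (blockIncidence V ι)ᵀ + π.permMatrix ℤ) * (blockPartner π N)ᵀ =
      of (fun _ _ => 1) - 1 := by
  set L := blockIncidence V ι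
  set P := π.permMatrix ℤ
  have hPPt : P * Pᵀ = 1 := by
    rw [transpose_permMatrix, ← permMatrix_mul, inv_mul_cancel, permMatrix_one]
  have hPtP : Pᵀ * P = 1 := by
    rw [transpose_permMatrix, ← permMatrix_mul, mul_inv_cancel, permMatrix_one]
  have hJP : (of fun _ _ => 1 : Matrix (V × ι) (V × ι) ℤ) * Pᵀ = of fun _ _ => 1 := by
    ext x y
    simp [P, mul_apply, ← Equiv.eq_symm_apply]
  have hLJL : L * (of fun _ _ => 1 : Matrix V V ℤ) * Lᵀ = of fun _ _ => 1 := by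
    ext x y
    simp [L, blockIncidence_mul_mul_transpose_apply]
  have hLPL' : Lᵀ * Pᵀ * L = Mᵀ - 1 := by
    simpa [transpose_mul, Matrix.mul_assoc] using congrArg transpose hLPL
  have hB' : (blockPartner π N)ᵀ = Pᵀ * (L * N * Lᵀ - P) * Pᵀ := by
    simp [blockPartner, L, P, transpose_mul, Matrix.mul_assoc]
  rw [hB']
  calc (L * Lᵀ + P) * (Pᵀ * (L * N * Lᵀ - P) * Pᵀ)
      = L * (Lᵀ * Pᵀ * L) * N * Lᵀ * Pᵀ - L * Lᵀ * (Pᵀ * P) * Pᵀ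
          + P * Pᵀ * (L * N * Lᵀ * Pᵀ) - P * Pᵀ * (P * Pᵀ) := by
        simp only [Matrix.add_mul, Matrix.mul_sub, Matrix.sub_mul, Matrix.mul_assoc]
        abel
    _ = L * (Mᵀ * N) * Lᵀ * Pᵀ - L * Lᵀ * Pᵀ - 1 := by
        rw [hLPL', hPPt, hPtP]
        simp only [Matrix.mul_sub, Matrix.sub_mul, Matrix.mul_one, Matrix.one_mul,
          Matrix.mul_assoc]
        abel
    _ = of (fun _ _ => 1) - 1 := by
        rw [hMN, Matrix.mul_add, Matrix.add_mul, Matrix.add_mul, hLJL, hJP, Matrix.mul_one]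
        abel

end blockIncidence

theorem stmt11_general {V W : Type*} [Fintype V] [Fintype W] [DecidableEq V]
    (A : Matrix V W ℤ) (hA : is01 A)
    (hrow : ∀ b, ∑ w, A b w = 3) (hcol : ∀ w, ∑ b, A b w = 3)
    (B : Matrix V W ℤ) (hB : is01 B)
    (hAB : A * Bᵀ = Matrix.of (fun _ _ => (1 : ℤ)) + 1)
    -- the perfect matching of rungs: edges of G not in the auxiliary graph A∘B
    (σ : V ≃ W) (hσ : ∀ i, A i (σ i) = 1 ∧ B i (σ i) = 0)
    -- the biclique expansion e(G,R)
    (A' : Matrix (V × Fin 2) (V × Fin 2) ℤ) (hA'01 : is01 A')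
    (hbic : ∀ i (p q : Fin 2), A' (i, p) (i, q) = 1)
    (hout : ∀ i j, i ≠ j →
      ∑ p : Fin 2, ∑ q : Fin 2, A' (i, p) (j, q) = A i (σ j))
    (hrow' : ∀ x, ∑ y, A' x y = 3) (hcol' : ∀ y, ∑ x, A' x y = 3) :
    ∃ B' : Matrix (V × Fin 2) (V × Fin 2) ℤ, is01 B' ∧
      A' * B'ᵀ = Matrix.of (fun _ _ => (1 : ℤ)) - 1 := by
  set Aσ := A.submatrix id σ
  set Bσ := B.submatrix id σ
  obtain ⟨π, hπ⟩ := exists_perm_eq_blocks_add_permMatrix hA'01 hbic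
    (by simpa using hrow') (by simpa using hcol')
  have hLPL : (blockIncidence V (Fin 2))ᵀ * π.permMatrix ℤ * blockIncidence V (Fin 2) =
      Aσ - 1 := by
    rw [eq_sub_of_add_eq' hπ.symm]
    exact transpose_blockIncidence_mul_sub_mul hbic hout fun i => (hσ i).1
  have hLehman : Aσᵀ * Bσ = of (fun _ _ => 1) + 1 := by
    refine transpose_mul_eq_ones_add_one (fun i => (Equiv.sum_comp σ (A i)).trans (hrow i))
      (fun j => hcol (σ j)) ?_
    rw [transpose_submatrix, submatrix_mul_equiv, hAB]
    ext
    simp [one_apply]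
  have hπB : ∀ z, Bσ z.1 (π z).1 = 1 := fun z => by
    obtain ⟨hne, hA1⟩ :=
      fst_ne_and_apply_eq_one_of_permMatrix_blocks (fun i j => hA i (σ j)) hLPL z
    have hAB_diag : ∑ w, A z.1 w * B z.1 w = ∑ w, A z.1 w - 1 := by
      have := congrFun (congrFun hAB z.1) z.1
      simp only [mul_apply, transpose_apply] at this
      simp [this, hrow]
    exact eq_one_of_sum_mul_eq_sum_sub_one (hA z.1) (hB z.1) hAB_diag (hσ z.1).1 (hσ z.1).2
      (fun h => hne (σ.injective h).symm) hA1
  refine ⟨blockPartner π Bσ, is01_blockPartner (fun i j => hB i (σ j)) hπB, ?_⟩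
  rw [hπ]
  exact blocks_add_permMatrix_mul_transpose_blockPartner hLPL hLehman

/-- Biclique expansion of the perfect matching of rungs of a cubic Lehman graph with
k = 1 yields a cubic negative Lehman graph (k = -1). -/
theorem stmt11 {V W : Type*} [Fintype V] [Fintype W] [DecidableEq V] [DecidableEq W]
    (A : Matrix V W ℤ) (hA : is01 A)
    (hrow : ∀ b, ∑ w, A b w = 3) (hcol : ∀ w, ∑ b, A b w = 3)
    (B : Matrix V W ℤ) (hB : is01 B)
    (hAB : A * Bᵀ = Matrix.of (fun _ _ => (1 : ℤ)) + 1)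
    -- the perfect matching of rungs: edges of G not in the auxiliary graph A∘B
    (σ : V ≃ W) (hσ : ∀ i, A i (σ i) = 1 ∧ B i (σ i) = 0)
    -- the biclique expansion e(G,R)
    (A' : Matrix (V × Fin 2) (V × Fin 2) ℤ) (hA'01 : is01 A')
    (hbic : ∀ i (p q : Fin 2), A' (i, p) (i, q) = 1)
    (hout : ∀ i j, i ≠ j →
      ∑ p : Fin 2, ∑ q : Fin 2, A' (i, p) (j, q) = A i (σ j))
    (hrow' : ∀ x, ∑ y, A' x y = 3) (hcol' : ∀ y, ∑ x, A' x y = 3) :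
    ∃ B' : Matrix (V × Fin 2) (V × Fin 2) ℤ, is01 B' ∧
      A' * B'ᵀ = Matrix.of (fun _ _ => (1 : ℤ)) - 1 :=
  stmt11_general A hA hrow hcol B hB hAB σ hσ A' hA'01 hbic hout hrow' hcol'
end
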